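/- Let Λ ⊂ {1,…,N}, let x̃ ∈ ℝ^N with supp(x̃) ∩ Λ = ∅, define h = A_Λᵀ A_Λ x̃, and suppose the M×N real matrix Φ satisfies the RIP of order ‖x̃‖₀ + |Λ| + 1 with isometry constant δ. If ‖x̃‖_∞ > (2δ/(1−δ))‖x̃‖₂, then every index j maximizing |h(j)| over j ∈ {1,…,N} belongs to supp(x̃); that is, there exists j ∈ supp(x̃) with |h(j)| strictly larger than |h(j')| for every j' ∉ supp(x̃). -/

import Mathlib

noncomputable section

namespace OMP

open Matrix Finset

/-- The support of a vector, as a `Finset`. -/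
def supp {n : ℕ} (x : Fin n → ℝ) : Finset (Fin n) :=
  Finset.univ.filter fun j => x j ≠ 0

/-- The Euclidean (ℓ²) norm of a vector. -/
def l2 {n : ℕ} (x : Fin n → ℝ) : ℝ := Real.sqrt (∑ j, x j ^ 2)

/-- The ℓ^∞ norm of a vector. -/
def linf {n : ℕ} (x : Fin n → ℝ) : ℝ := ⨆ j, |x j|

/-- The standard inner product of two vectors. -/
def dotp {n : ℕ} (x y : Fin n → ℝ) : ℝ := ∑ j, x j * y j

/-- The restriction of a vector to a set of indices (zero elsewhere). -/
def restr {n : ℕ} (Γ : Finset (Fin n)) (x : Fin n → ℝ) : Fin n → ℝ :=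
  fun j => if j ∈ Γ then x j else 0

/-- The restricted isometry property of order `K` with isometry constant `δ`. -/
def RIP {M N : ℕ} (K : ℕ) (Φ : Matrix (Fin M) (Fin N) ℝ) (δ : ℝ) : Prop :=
  0 < δ ∧ δ < 1 ∧ ∀ x : Fin N → ℝ, (supp x).card ≤ K →
    (1 - δ) * l2 x ^ 2 ≤ l2 (Φ.mulVec x) ^ 2 ∧
      l2 (Φ.mulVec x) ^ 2 ≤ (1 + δ) * l2 x ^ 2

/-- The span of the columns of `Φ` indexed by `Λ`, as a submodule of Euclidean space. -/
def colSpan {M N : ℕ} (Φ : Matrix (Fin M) (Fin N) ℝ) (Λ : Finset (Fin N)) :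
    Submodule ℝ (EuclideanSpace ℝ (Fin M)) :=
  Submodule.span ℝ ((fun j => (WithLp.equiv 2 (Fin M → ℝ)).symm fun i => Φ i j) '' (Λ : Set (Fin N)))

/-- Orthogonal projection `P_Λ` onto the span of the columns of `Φ` indexed by `Λ`. -/
def projCol {M N : ℕ} (Φ : Matrix (Fin M) (Fin N) ℝ) (Λ : Finset (Fin N))
    (v : Fin M → ℝ) : Fin M → ℝ :=
  WithLp.equiv 2 (Fin M → ℝ)
    (Submodule.orthogonalProjection (colSpan Φ Λ) ((WithLp.equiv 2 (Fin M → ℝ)).symm v) : EuclideanSpace ℝ (Fin M))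

/-- The matrix `A_Λ = (I - P_Λ) Φ`: the columns of `Φ` orthogonalized against `colSpan Φ Λ`. -/
def Amat {M N : ℕ} (Φ : Matrix (Fin M) (Fin N) ℝ) (Λ : Finset (Fin N)) :
    Matrix (Fin M) (Fin N) ℝ :=
  Matrix.of fun i j => Φ i j - projCol Φ Λ (fun i' => Φ i' j) i

end OMP

/-!
Write `P_Λ Φ x̃ = Φ z` with `supp z ⊆ Λ`. Then `A_Λ x̃ = Φ y` for `y = x̃ - z`, a vector that agrees
with `x̃` off `Λ` and has at most `‖x̃‖₀ + |Λ|` nonzero entries. Since `A_Λ x̃ ⊥ span (Φ_Λ)`, we get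
`h = Φᵀ Φ y`, which vanishes on `Λ`, and the RIP turned into a bound on inner products by
polarization gives `|h j - y j| ≤ δ ‖y‖₂` for every `j`. As `‖Φ y‖₂ = ‖A_Λ x̃‖₂ ≤ ‖Φ x̃‖₂`, the RIP
also gives `(1 - δ) ‖y‖₂ ≤ ‖x̃‖₂`, so the hypothesis says `‖x̃‖_∞ > 2 δ ‖y‖₂`. Hence at an index
where `|x̃|` is maximal, `|h| > δ ‖y‖₂`, while `|h| ≤ δ ‖y‖₂` off `supp x̃`.
-/

section NearIsometry

variable {E F : Type*} [NormedAddCommGroup E] [InnerProductSpace ℝ E]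
  [NormedAddCommGroup F] [InnerProductSpace ℝ F]

open RealInnerProductSpace

theorem abs_inner_map_sub_inner_le_of_add_of_sub (T : E →ₗ[ℝ] F) {δ : ℝ} {u v : E}
    (hadd : |‖T (u + v)‖ ^ 2 - ‖u + v‖ ^ 2| ≤ δ * ‖u + v‖ ^ 2)
    (hsub : |‖T (u - v)‖ ^ 2 - ‖u - v‖ ^ 2| ≤ δ * ‖u - v‖ ^ 2) :
    |⟪T u, T v⟫ - ⟪u, v⟫| ≤ δ / 2 * (‖u‖ ^ 2 + ‖v‖ ^ 2) := by
  rw [map_add, norm_add_sq_real, norm_add_sq_real] at hadd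
  rw [map_sub, norm_sub_sq_real, norm_sub_sq_real] at hsub
  rw [abs_le] at *
  constructor <;> nlinarith [sq_nonneg ‖u‖]

theorem abs_inner_map_sub_inner_le (T : E →ₗ[ℝ] F) {δ : ℝ} {u v : E}
    (hT : ∀ a b : ℝ, |‖T (a • u + b • v)‖ ^ 2 - ‖a • u + b • v‖ ^ 2| ≤ δ * ‖a • u + b • v‖ ^ 2) :
    |⟪T u, T v⟫ - ⟪u, v⟫| ≤ δ * ‖u‖ * ‖v‖ := by
  rcases eq_or_ne u 0 with rfl | hu
  · simp
  rcases eq_or_ne v 0 with rfl | hv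
  · simp
  have hu' : 0 < ‖u‖ := norm_pos_iff.2 hu
  have hv' : 0 < ‖v‖ := norm_pos_iff.2 hv
  -- On the unit vectors `a • u` and `b • v` the polarization bound reads `δ`.
  set a := ‖u‖⁻¹
  set b := ‖v‖⁻¹
  have hunit := abs_inner_map_sub_inner_le_of_add_of_sub T (u := a • u) (v := b • v) (hT a b)
    (by simpa [sub_eq_add_neg, neg_smul] using hT a (-b))
  have hscale : ⟪T (a • u), T (b • v)⟫ - ⟪a • u, b • v⟫ = a * b * (⟪T u, T v⟫ - ⟪u, v⟫) := by
    simp only [map_smul, real_inner_smul_left, real_inner_smul_right]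
    ring
  have hau : ‖a • u‖ = 1 := by simp [a, norm_smul, hu'.ne']
  have hbv : ‖b • v‖ = 1 := by simp [b, norm_smul, hv'.ne']
  rw [hscale, abs_mul, abs_of_pos (by positivity), hau, hbv] at hunit
  calc |⟪T u, T v⟫ - ⟪u, v⟫| = ‖u‖ * ‖v‖ * (a * b * |⟪T u, T v⟫ - ⟪u, v⟫|) := by
        simp only [a, b]
        field_simp
    _ ≤ ‖u‖ * ‖v‖ * (δ / 2 * (1 ^ 2 + 1 ^ 2)) := by gcongr
    _ = δ * ‖u‖ * ‖v‖ := by ring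

end NearIsometry

namespace OMP

open Matrix Finset

section Vectors

variable {n : ℕ}

lemma l2_nonneg (x : Fin n → ℝ) : 0 ≤ l2 x := Real.sqrt_nonneg _

lemma l2_eq_norm (x : Fin n → ℝ) : l2 x = ‖WithLp.toLp 2 x‖ := by
  simp [l2, EuclideanSpace.norm_eq]

lemma supp_smul_add_smul_subset (a b : ℝ) (u v : Fin n → ℝ) :
    supp (a • u + b • v) ⊆ supp u ∪ supp v := by
  intro i
  simp only [supp, mem_filter, mem_univ, true_and, mem_union, Pi.add_apply, Pi.smul_apply,
    smul_eq_mul]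
  contrapose!
  rintro ⟨hu, hv⟩
  simp [hu, hv]

lemma card_supp_single_union_le (j : Fin n) (y : Fin n → ℝ) :
    (supp (Pi.single j 1) ∪ supp y).card ≤ (supp y).card + 1 := by
  have hsingle : supp (Pi.single j (1 : ℝ)) ⊆ {j} := by
    intro i
    simp +contextual [supp, Pi.single_apply]
  calc (supp (Pi.single j 1) ∪ supp y).card ≤ ({j} ∪ supp y).card :=
        card_le_card (union_subset_union_left hsingle)
    _ ≤ (supp y).card + 1 := by
        rw [singleton_union]
        exact card_insert_le _ _

lemma supp_subset_union_of_eqOn_compl {x y : Fin n → ℝ} {Λ : Finset (Fin n)}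
    (hyx : ∀ j ∉ Λ, y j = x j) : supp y ⊆ supp x ∪ Λ := by
  intro j hj
  by_cases hjΛ : j ∈ Λ
  · exact mem_union_right _ hjΛ
  · simp_all [supp]

lemma exists_abs_eq_linf {x : Fin n → ℝ} (hx : linf x ≠ 0) : ∃ j, |x j| = linf x := by
  have : Nonempty (Fin n) := by
    by_contra hn
    rw [not_nonempty_iff] at hn
    exact hx (Real.iSup_of_isEmpty _)
  exact exists_eq_ciSup_of_finite

end Vectors

section RIP

variable {M N K : ℕ} {Φ : Matrix (Fin M) (Fin N) ℝ} {δ : ℝ}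

theorem RIP.abs_norm_sq_sub_le (hΦ : RIP K Φ δ) {x : Fin N → ℝ} (hx : (supp x).card ≤ K) :
    |‖toEuclideanLin Φ (WithLp.toLp 2 x)‖ ^ 2 - ‖WithLp.toLp 2 x‖ ^ 2| ≤
      δ * ‖WithLp.toLp 2 x‖ ^ 2 := by
  obtain ⟨hlow, hup⟩ := hΦ.2.2 x hx
  rw [l2_eq_norm, l2_eq_norm] at hlow hup
  rw [abs_le]
  constructor <;> simp only [toLpLin_apply] <;> linarith

theorem RIP.abs_transpose_mulVec_mulVec_sub_le (hΦ : RIP K Φ δ) {y : Fin N → ℝ}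
    (hy : (supp y).card + 1 ≤ K) (j : Fin N) :
    |(Φᵀ *ᵥ (Φ *ᵥ y)) j - y j| ≤ δ * l2 y := by
  have key := abs_inner_map_sub_inner_le (toEuclideanLin Φ) (δ := δ)
    (u := WithLp.toLp 2 (Pi.single j 1)) (v := WithLp.toLp 2 y) fun a b => by
      rw [← WithLp.toLp_smul, ← WithLp.toLp_smul, ← WithLp.toLp_add]
      exact hΦ.abs_norm_sq_sub_le ((card_le_card (supp_smul_add_smul_subset a b _ _)).trans
        ((card_supp_single_union_le j y).trans hy))
  have hnorm : ‖WithLp.toLp 2 (Pi.single j 1 : Fin N → ℝ)‖ = 1 := by simp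
  simp only [toLpLin_apply, EuclideanSpace.inner_toLp_toLp, star_trivial,
    mulVec_single_one, dotProduct_single_one] at key
  rwa [hnorm, mul_one, dotProduct_comm, ← l2_eq_norm] at key

theorem RIP.one_sub_mul_l2_le (hΦ : RIP K Φ δ) {x y : Fin N → ℝ} (hx : (supp x).card ≤ K)
    (hy : (supp y).card ≤ K) (hxy : l2 (Φ *ᵥ y) ≤ l2 (Φ *ᵥ x)) : (1 - δ) * l2 y ≤ l2 x := by
  obtain ⟨hδ0, hδ1, hΦ⟩ := hΦ
  have hsq : (1 - δ) * l2 y ^ 2 ≤ (1 + δ) * l2 x ^ 2 :=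
    calc (1 - δ) * l2 y ^ 2 ≤ l2 (Φ *ᵥ y) ^ 2 := (hΦ y hy).1
      _ ≤ l2 (Φ *ᵥ x) ^ 2 := by gcongr; exact l2_nonneg _
      _ ≤ (1 + δ) * l2 x ^ 2 := (hΦ x hx).2
  refine (pow_le_pow_iff_left₀ (mul_nonneg (by linarith) (l2_nonneg y)) (l2_nonneg x)
    two_ne_zero).1 ?_
  calc ((1 - δ) * l2 y) ^ 2 = (1 - δ) * ((1 - δ) * l2 y ^ 2) := by ring
    _ ≤ (1 - δ) * ((1 + δ) * l2 x ^ 2) := by gcongr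
    _ ≤ l2 x ^ 2 := by nlinarith [mul_nonneg (sq_nonneg δ) (sq_nonneg (l2 x))]

end RIP

section ColumnSpace

variable {M N : ℕ} (Φ : Matrix (Fin M) (Fin N) ℝ) (Λ : Finset (Fin N))

lemma mulVec_eq_sum_smul_col (x : Fin N → ℝ) : Φ *ᵥ x = ∑ j, x j • Φ.col j := by
  ext i
  simp [mulVec, dotProduct, mul_comm]

lemma toLp_col_mem_colSpan {j : Fin N} (hj : j ∈ Λ) : WithLp.toLp 2 (Φ.col j) ∈ colSpan Φ Λ :=
  Submodule.subset_span ⟨j, hj, rfl⟩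

lemma exists_eq_toLp_mulVec_of_mem_colSpan {w : EuclideanSpace ℝ (Fin M)}
    (hw : w ∈ colSpan Φ Λ) :
    ∃ z : Fin N → ℝ, (∀ j ∉ Λ, z j = 0) ∧ w = WithLp.toLp 2 (Φ *ᵥ z) := by
  obtain ⟨c, rfl⟩ := (Submodule.mem_span_image_finset_iff_exists_fun' ℝ).1 hw
  refine ⟨restr Λ c, fun j hj => if_neg hj, ?_⟩
  rw [mulVec_eq_sum_smul_col]
  simp only [WithLp.equiv_symm_apply, restr, ite_smul, zero_smul, sum_ite_mem, univ_inter,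
    WithLp.toLp_sum, WithLp.toLp_smul]
  rfl

lemma toLp_Amat_mulVec (x : Fin N → ℝ) :
    WithLp.toLp 2 (Amat Φ Λ *ᵥ x) = (colSpan Φ Λ)ᗮ.starProjection (WithLp.toLp 2 (Φ *ᵥ x)) := by
  rw [Submodule.starProjection_orthogonal_val]
  ext i
  simp only [Amat, mulVec, dotProduct, of_apply, sub_mul, sum_sub_distrib]
  conv_rhs => rw [mulVec_eq_sum_smul_col]
  simp only [mul_comm, WithLp.toLp_sum, WithLp.toLp_smul, map_sum, map_smul, PiLp.sub_apply,
    WithLp.ofLp_sum, WithLp.ofLp_smul, Finset.sum_apply, Pi.smul_apply, col_apply, smul_eq_mul,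
    sub_right_inj]
  rfl

lemma toLp_Amat_mulVec_mem_orthogonal (x : Fin N → ℝ) :
    WithLp.toLp 2 (Amat Φ Λ *ᵥ x) ∈ (colSpan Φ Λ)ᗮ := by
  rw [toLp_Amat_mulVec]
  exact Submodule.starProjection_apply_mem _ _

lemma l2_Amat_mulVec_le (x : Fin N → ℝ) : l2 (Amat Φ Λ *ᵥ x) ≤ l2 (Φ *ᵥ x) := by
  rw [l2_eq_norm, l2_eq_norm, toLp_Amat_mulVec]
  exact Submodule.norm_starProjection_apply_le _ _

lemma exists_Amat_mulVec_eq_mulVec (x : Fin N → ℝ) :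
    ∃ y : Fin N → ℝ, Amat Φ Λ *ᵥ x = Φ *ᵥ y ∧ ∀ j ∉ Λ, y j = x j := by
  obtain ⟨z, hzΛ, hz⟩ := exists_eq_toLp_mulVec_of_mem_colSpan Φ Λ
    ((colSpan Φ Λ).starProjection_apply_mem (WithLp.toLp 2 (Φ *ᵥ x)))
  refine ⟨x - z, WithLp.toLp_injective 2 ?_, fun j hj => by simp [hzΛ j hj]⟩
  rw [toLp_Amat_mulVec, Submodule.starProjection_orthogonal_val, hz, mulVec_sub, WithLp.toLp_sub]

lemma dotProduct_eq_zero_of_mem_orthogonal {K : Submodule ℝ (EuclideanSpace ℝ (Fin M))}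
    {u w : Fin M → ℝ} (hu : WithLp.toLp 2 u ∈ K) (hw : WithLp.toLp 2 w ∈ Kᗮ) : u ⬝ᵥ w = 0 := by
  have h := Submodule.inner_right_of_mem_orthogonal hu hw
  rwa [EuclideanSpace.inner_toLp_toLp, star_trivial, dotProduct_comm] at h

lemma Amat_transpose_mulVec_of_mem_orthogonal {w : Fin M → ℝ}
    (hw : WithLp.toLp 2 w ∈ (colSpan Φ Λ)ᗮ) : (Amat Φ Λ)ᵀ *ᵥ w = Φᵀ *ᵥ w := by
  ext j
  change (Φ.col j - projCol Φ Λ (Φ.col j)) ⬝ᵥ w = Φ.col j ⬝ᵥ w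
  rw [sub_dotProduct, dotProduct_eq_zero_of_mem_orthogonal (u := projCol Φ Λ (Φ.col j))
    ((colSpan Φ Λ).starProjection_apply_mem _) hw, sub_zero]

lemma transpose_mulVec_apply_eq_zero_of_mem_orthogonal {w : Fin M → ℝ}
    (hw : WithLp.toLp 2 w ∈ (colSpan Φ Λ)ᗮ) {j : Fin N} (hj : j ∈ Λ) : (Φᵀ *ᵥ w) j = 0 :=
  dotProduct_eq_zero_of_mem_orthogonal (toLp_col_mem_colSpan Φ Λ hj) hw

end ColumnSpace

lemma exists_mem_supp_forall_abs_lt {n : ℕ} {x y h : Fin n → ℝ} {Λ : Finset (Fin n)} {ε : ℝ}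
    (hdisj : supp x ∩ Λ = ∅) (hε : 0 ≤ ε) (hx : 2 * ε < linf x)
    (hyx : ∀ j ∉ Λ, y j = x j) (hhy : ∀ j, |h j - y j| ≤ ε) (hΛ : ∀ j ∈ Λ, h j = 0) :
    ∃ j ∈ supp x, ∀ j' ∉ supp x, |h j'| < |h j| := by
  obtain ⟨j, hj⟩ := exists_abs_eq_linf (x := x) (by linarith)
  have hjx : j ∈ supp x := by
    simp only [supp, mem_filter, mem_univ, true_and]
    rintro hzero
    rw [hzero, abs_zero] at hj
    linarith
  have hjΛ : j ∉ Λ := fun hjΛ => by simpa [hdisj] using mem_inter.2 ⟨hjx, hjΛ⟩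
  have hlarge : ε < |h j| := by
    have hclose := hhy j
    rw [hyx j hjΛ] at hclose
    have := abs_sub_abs_le_abs_sub (x j) (h j)
    rw [abs_sub_comm, hj] at this
    linarith
  refine ⟨j, hjx, fun j' hj' => lt_of_le_of_lt ?_ hlarge⟩
  by_cases hj'Λ : j' ∈ Λ
  · rw [hΛ j' hj'Λ, abs_zero]
    exact hε
  · have hyj' : y j' = 0 := by simpa [supp, hyx j' hj'Λ] using hj'
    simpa [hyj'] using hhy j'

/-- success of the identification step. -/
theorem stmt4 {M N : ℕ} (Φ : Matrix (Fin M) (Fin N) ℝ) (δ : ℝ) (Λ : Finset (Fin N))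
    (xt : Fin N → ℝ) (hdisj : supp xt ∩ Λ = ∅)
    (h : Fin N → ℝ) (hh : h = (Amat Φ Λ)ᵀ.mulVec ((Amat Φ Λ).mulVec xt))
    (hRIP : RIP ((supp xt).card + Λ.card + 1) Φ δ)
    (hinf : linf xt > 2 * δ / (1 - δ) * l2 xt) :
    ∃ j ∈ supp xt, ∀ j' ∉ supp xt, |h j'| < |h j| := by
  obtain ⟨y, hAy, hyx⟩ := exists_Amat_mulVec_eq_mulVec Φ Λ xt
  have hcard : (supp y).card ≤ (supp xt).card + Λ.card :=
    (card_le_card (supp_subset_union_of_eqOn_compl hyx)).trans (card_union_le _ _)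
  have hy : (1 - δ) * l2 y ≤ l2 xt :=
    hRIP.one_sub_mul_l2_le (by omega) (by omega) (hAy ▸ l2_Amat_mulVec_le Φ Λ xt)
  have hδ0 : 0 < δ := hRIP.1
  have hδ1 : δ < 1 := hRIP.2.1
  have hε : 2 * (δ * l2 y) < linf xt :=
    calc 2 * (δ * l2 y) ≤ 2 * δ / (1 - δ) * l2 xt := by
          rw [div_mul_eq_mul_div, le_div_iff₀ (by linarith)]
          nlinarith
      _ < linf xt := hinf
  have horth : WithLp.toLp 2 (Φ *ᵥ y) ∈ (colSpan Φ Λ)ᗮ :=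
    hAy ▸ toLp_Amat_mulVec_mem_orthogonal Φ Λ xt
  rw [hAy, Amat_transpose_mulVec_of_mem_orthogonal Φ Λ horth] at hh
  subst hh
  exact exists_mem_supp_forall_abs_lt hdisj (mul_nonneg hδ0.le (l2_nonneg y)) hε hyx
    (hRIP.abs_transpose_mulVec_mulVec_sub_le (by omega))
    (fun j hj => transpose_mulVec_apply_eq_zero_of_mem_orthogonal Φ Λ horth hj)

end OMP
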